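/- arXiv:2211.05736 — 4 statements merged into one kernel-verified Lean document; each statement's English description precedes it below -/
import Mathlib

section
/- The operation on ℝ³ defined by (p₀,y₀,t₀) ∘ (p,y,t) = (p√(p₀²+1) + p₀√(1+p²), y₀ + y√(p₀²+1) + p₀t, t₀ + t√(p₀²+1) + p₀y) is associative. -/
noncomputable def lorentzMul (a b : ℝ × ℝ × ℝ) : ℝ × ℝ × ℝ :=
  (b.1 * Real.sqrt (a.1 ^ 2 + 1) + a.1 * Real.sqrt (1 + b.1 ^ 2),
   a.2.1 + b.2.1 * Real.sqrt (a.1 ^ 2 + 1) + a.1 * b.2.2,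
   a.2.2 + b.2.2 * Real.sqrt (a.1 ^ 2 + 1) + a.1 * b.2.1)

lemma sqrt_comp (a x : ℝ) :
    Real.sqrt ((x * Real.sqrt (a ^ 2 + 1) + a * Real.sqrt (1 + x ^ 2)) ^ 2 + 1)
      = Real.sqrt (a ^ 2 + 1) * Real.sqrt (1 + x ^ 2) + a * x := by
  have hs : Real.sqrt (a ^ 2 + 1) ^ 2 = a ^ 2 + 1 := Real.sq_sqrt (by positivity)
  have ht : Real.sqrt (1 + x ^ 2) ^ 2 = 1 + x ^ 2 := Real.sq_sqrt (by positivity)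
  have hs0 : 0 ≤ Real.sqrt (a ^ 2 + 1) := Real.sqrt_nonneg _
  have ht0 : 0 ≤ Real.sqrt (1 + x ^ 2) := Real.sqrt_nonneg _
  have hpos : 0 ≤ Real.sqrt (a ^ 2 + 1) * Real.sqrt (1 + x ^ 2) + a * x := by
    nlinarith [sq_nonneg (Real.sqrt (a ^ 2 + 1) * Real.sqrt (1 + x ^ 2) + a * x),
      sq_nonneg (Real.sqrt (a ^ 2 + 1) * Real.sqrt (1 + x ^ 2) - a * x),
      sq_nonneg (a - x), sq_nonneg (a + x), mul_nonneg hs0 ht0]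
  rw [show (x * Real.sqrt (a ^ 2 + 1) + a * Real.sqrt (1 + x ^ 2)) ^ 2 + 1
      = (Real.sqrt (a ^ 2 + 1) * Real.sqrt (1 + x ^ 2) + a * x) ^ 2 by nlinarith]
  exact Real.sqrt_sq hpos

theorem lorentzMul_assoc (a b c : ℝ × ℝ × ℝ) :
    lorentzMul (lorentzMul a b) c = lorentzMul a (lorentzMul b c) := by
  obtain ⟨p, y, t⟩ := a
  obtain ⟨q, z, u⟩ := b
  obtain ⟨r, w, v⟩ := c
  simp only [lorentzMul, Prod.mk.injEq]
  have h1 := sqrt_comp p q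
  have h2 := sqrt_comp q r
  have hs : Real.sqrt (p ^ 2 + 1) ^ 2 = p ^ 2 + 1 := Real.sq_sqrt (by positivity)
  have ht : Real.sqrt (1 + q ^ 2) ^ 2 = 1 + q ^ 2 := Real.sq_sqrt (by positivity)
  have hqq : Real.sqrt (q ^ 2 + 1) = Real.sqrt (1 + q ^ 2) := by ring_nf
  refine ⟨?_, ?_, ?_⟩
  · rw [show 1 + (r * Real.sqrt (q ^ 2 + 1) + q * Real.sqrt (1 + r ^ 2)) ^ 2
        = (r * Real.sqrt (q ^ 2 + 1) + q * Real.sqrt (1 + r ^ 2)) ^ 2 + 1 by ring,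
      h1, h2, hqq]
    ring
  · rw [h1, hqq]; ring
  · rw [h1, hqq]; ring
end

section
/- Let p ∈ ℝᵈ and set q = p/√(1 + √(|p|²+1)). Then (I + q⊗q)² = I + p⊗p and 1 + |q|² = √(|p|²+1). -/
open Matrix

lemma vecMulVec_mul_vecMulVec' (d : ℕ) (q : Fin d → ℝ) :
    vecMulVec q q * vecMulVec q q = (∑ i, q i ^ 2) • vecMulVec q q := by
  ext i j
  simp only [Matrix.mul_apply, vecMulVec_apply, Matrix.smul_apply, smul_eq_mul,
    Finset.sum_mul, Finset.mul_sum]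
  exact Finset.sum_congr rfl fun k _ => by ring

theorem sqrt_one_add_vecMulVec (d : ℕ) (p : Fin d → ℝ)
    (q : Fin d → ℝ)
    (hq : q = (1 / Real.sqrt (1 + Real.sqrt ((∑ i, p i ^ 2) + 1))) • p) :
    ((1 : Matrix (Fin d) (Fin d) ℝ) + vecMulVec q q) *
      ((1 : Matrix (Fin d) (Fin d) ℝ) + vecMulVec q q) =
      (1 : Matrix (Fin d) (Fin d) ℝ) + vecMulVec p p ∧
    1 + ∑ i, q i ^ 2 = Real.sqrt ((∑ i, p i ^ 2) + 1) := by
  set x : ℝ := ∑ i, p i ^ 2 with hxdef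
  have hx : 0 ≤ x := Finset.sum_nonneg fun i _ => sq_nonneg _
  set s : ℝ := Real.sqrt (x + 1) with hsdef
  have hs2 : s ^ 2 = x + 1 := Real.sq_sqrt (by linarith)
  have hs1 : 1 ≤ s := by nlinarith [Real.sqrt_nonneg (x + 1)]
  have hs0 : 0 < 1 + s := by linarith
  have hα : (1 / Real.sqrt (1 + s)) ^ 2 = 1 / (1 + s) := by
    rw [div_pow, one_pow, Real.sq_sqrt hs0.le]
  have hqsum : ∑ i, q i ^ 2 = s - 1 := by
    have : ∑ i, q i ^ 2 = (1 / Real.sqrt (1 + s)) ^ 2 * x := by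
      rw [hq, hxdef, Finset.mul_sum]
      exact Finset.sum_congr rfl fun i _ => by simp [mul_pow]
    rw [this, hα]
    field_simp
    nlinarith
  have hqq : vecMulVec q q = (1 / (1 + s)) • vecMulVec p p := by
    ext i j
    rw [hq]
    simp only [vecMulVec_apply, Pi.smul_apply, smul_eq_mul, Matrix.smul_apply]
    rw [← hα]; ring
  constructor
  · rw [add_mul, mul_add, mul_add, vecMulVec_mul_vecMulVec', hqsum]
    simp only [one_mul, mul_one]
    rw [add_assoc]
    congr 1
    rw [hqq, smul_smul, ← add_smul, ← add_smul,
      show (1 : ℝ) / (1 + s) + (1 / (1 + s) + (s - 1) * (1 / (1 + s))) = 1 from by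
        field_simp; ring]
    exact one_smul ℝ _
  · rw [hqsum]; ring_nf
end

section
/- For every smooth f : ℝ³ → ℝ and every p ∈ ℝ, setting x = φ(p) = p/√(1+p²) and u(x,y,t) = f(ψ(x),y,t), one has ∂²f/∂p²(p,y,t) = (1-x²)³ ∂²u/∂x²(x,y,t) - 3x(1-x²)² ∂u/∂x(x,y,t). -/
noncomputable def phi (p : ℝ) : ℝ := p / Real.sqrt (1 + p ^ 2)

noncomputable def psi (x : ℝ) : ℝ := x / Real.sqrt (1 - x ^ 2)

lemma sqrt_pos' (q : ℝ) : 0 < Real.sqrt (1 + q ^ 2) :=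
  Real.sqrt_pos.2 (by positivity)

lemma sq_sqrt' (q : ℝ) : Real.sqrt (1 + q ^ 2) ^ 2 = 1 + q ^ 2 :=
  Real.sq_sqrt (by positivity)

lemma psi_phi (q : ℝ) : psi (phi q) = q := by
  have hs := sqrt_pos' q
  have hs2 := sq_sqrt' q
  unfold psi phi
  have h1 : 1 - (q / Real.sqrt (1 + q ^ 2)) ^ 2 = (Real.sqrt (1 + q ^ 2))⁻¹ ^ 2 := by
    field_simp
    linarith [hs2]
  rw [h1, Real.sqrt_sq (by positivity)]
  field_simp

lemma hasDerivAt_sqrt' (q : ℝ) :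
    HasDerivAt (fun q : ℝ => Real.sqrt (1 + q ^ 2))
      (1 / (2 * Real.sqrt (1 + q ^ 2)) * (2 * q)) q := by
  have h1 : HasDerivAt (fun q : ℝ => 1 + q ^ 2) (2 * q) q := by
    simpa using ((hasDerivAt_pow 2 q).const_add 1)
  simpa [Function.comp_def] using
    (Real.hasDerivAt_sqrt (ne_of_gt (by positivity : (0:ℝ) < 1 + q ^ 2))).comp q h1

lemma hasDerivAt_phi (q : ℝ) :
    HasDerivAt phi ((Real.sqrt (1 + q ^ 2)) ^ 3)⁻¹ q := by
  have hs := sqrt_pos' q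
  have hs2 := sq_sqrt' q
  have h3 := (hasDerivAt_id q).div (hasDerivAt_sqrt' q) (ne_of_gt hs)
  have he : (1 * Real.sqrt (1 + q ^ 2) - q * (1 / (2 * Real.sqrt (1 + q ^ 2)) * (2 * q))) /
      Real.sqrt (1 + q ^ 2) ^ 2 = ((Real.sqrt (1 + q ^ 2)) ^ 3)⁻¹ := by
    field_simp
    linear_combination hs2
  rw [← he]
  exact h3

lemma hasDerivAt_invcube (q : ℝ) :
    HasDerivAt (fun q : ℝ => ((Real.sqrt (1 + q ^ 2)) ^ 3)⁻¹)
      (-3 * q / (Real.sqrt (1 + q ^ 2)) ^ 5) q := by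
  have hs := sqrt_pos' q
  have hs2 := sq_sqrt' q
  have h1 := ((hasDerivAt_sqrt' q).pow 3).inv (pow_ne_zero 3 (ne_of_gt hs))
  have he : -(↑3 * Real.sqrt (1 + q ^ 2) ^ (3 - 1) * (1 / (2 * Real.sqrt (1 + q ^ 2)) * (2 * q))) /
      (Real.sqrt (1 + q ^ 2) ^ 3) ^ 2 = -3 * q / (Real.sqrt (1 + q ^ 2)) ^ 5 := by
    field_simp
  rw [← he]
  exact h1

lemma phi_mem (q : ℝ) : phi q ∈ Set.Ioo (-1 : ℝ) 1 := by
  have hs := sqrt_pos' q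
  have habs : |q| < Real.sqrt (1 + q ^ 2) := by
    have : Real.sqrt (q ^ 2) < Real.sqrt (1 + q ^ 2) :=
      Real.sqrt_lt_sqrt (sq_nonneg q) (by linarith)
    rwa [Real.sqrt_sq_eq_abs] at this
  have := abs_lt.1 habs
  constructor
  · rw [phi, lt_div_iff₀ hs]; linarith
  · rw [phi, div_lt_one hs]; linarith

theorem second_derivative_change_of_variables
    (f : ℝ × ℝ × ℝ → ℝ) (hf : ContDiff ℝ (⊤ : ℕ∞) f)
    (u : ℝ × ℝ × ℝ → ℝ) (hu : ∀ x y t : ℝ, u (x, y, t) = f (psi x, y, t))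
    (p y t : ℝ) :
    deriv (deriv (fun q => f (q, y, t))) p
      = (1 - phi p ^ 2) ^ 3 * deriv (deriv (fun x => u (x, y, t))) (phi p)
        - 3 * phi p * (1 - phi p ^ 2) ^ 2 * deriv (fun x => u (x, y, t)) (phi p) := by
  set g : ℝ → ℝ := fun x => u (x, y, t) with hgdef
  -- smoothness of g on (-1,1)
  have hg : ContDiffOn ℝ (⊤ : ℕ∞) g (Set.Ioo (-1 : ℝ) 1) := by
    intro x hx
    have hx2 : (0:ℝ) < 1 - x ^ 2 := by
      obtain ⟨h1, h2⟩ := hx; nlinarith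
    have hsq : ContDiffAt ℝ (⊤ : ℕ∞) (fun x : ℝ => Real.sqrt (1 - x ^ 2)) x :=
      (Real.contDiffAt_sqrt (ne_of_gt hx2)).comp x
        ((contDiff_const.sub (contDiff_id.pow 2)).contDiffAt)
    have hpsi : ContDiffAt ℝ (⊤ : ℕ∞) psi x := by
      unfold psi
      exact contDiffAt_id.div hsq (by positivity)
    have hcomp : ContDiffAt ℝ (⊤ : ℕ∞) (fun x : ℝ => f (psi x, y, t)) x :=
      hf.contDiffAt.comp x (hpsi.prodMk (contDiffAt_const.prodMk contDiffAt_const))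
    have : g = fun x : ℝ => f (psi x, y, t) := funext fun x => hu x y t
    rw [this]
    exact hcomp.contDiffWithinAt
  have hopen : IsOpen (Set.Ioo (-1 : ℝ) 1) := isOpen_Ioo
  have hdg : ∀ q : ℝ, DifferentiableAt ℝ g (phi q) := fun q =>
    ((hg.differentiableOn (by simp)).differentiableAt (hopen.mem_nhds (phi_mem q)))
  have hg' : ContDiffOn ℝ (⊤ : ℕ∞) (deriv g) (Set.Ioo (-1 : ℝ) 1) :=
    hg.deriv_of_isOpen hopen (by simp)
  have hddg : DifferentiableAt ℝ (deriv g) (phi p) :=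
    (hg'.differentiableOn (by simp)).differentiableAt (hopen.mem_nhds (phi_mem p))
  -- F = g ∘ phi
  have hFg : (fun q : ℝ => f (q, y, t)) = fun q => g (phi q) := by
    funext q
    rw [hgdef]
    simp only [hu, psi_phi]
  have hF1 : ∀ q : ℝ, HasDerivAt (fun q : ℝ => f (q, y, t))
      (deriv g (phi q) * ((Real.sqrt (1 + q ^ 2)) ^ 3)⁻¹) q := by
    intro q
    rw [hFg]
    exact (hdg q).hasDerivAt.comp q (hasDerivAt_phi q)
  have hdF : deriv (fun q : ℝ => f (q, y, t))
      = fun q => deriv g (phi q) * ((Real.sqrt (1 + q ^ 2)) ^ 3)⁻¹ :=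
    funext fun q => (hF1 q).deriv
  have hF2 : HasDerivAt (deriv (fun q : ℝ => f (q, y, t)))
      (deriv (deriv g) (phi p) * ((Real.sqrt (1 + p ^ 2)) ^ 3)⁻¹ * ((Real.sqrt (1 + p ^ 2)) ^ 3)⁻¹
        + deriv g (phi p) * (-3 * p / (Real.sqrt (1 + p ^ 2)) ^ 5)) p := by
    rw [hdF]
    exact (hddg.hasDerivAt.comp p (hasDerivAt_phi p)).mul (hasDerivAt_invcube p)
  rw [hF2.deriv]
  have hs := sqrt_pos' p
  have hs2 := sq_sqrt' p
  have h1 : 1 - phi p ^ 2 = ((Real.sqrt (1 + p ^ 2)) ^ 2)⁻¹ := by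
    rw [phi, div_pow]
    field_simp
    linarith [hs2]
  have hA : (1 - phi p ^ 2) ^ 3 = ((Real.sqrt (1 + p ^ 2)) ^ 3)⁻¹ * ((Real.sqrt (1 + p ^ 2)) ^ 3)⁻¹ := by
    rw [h1]
    field_simp
  have hB : 3 * phi p * (1 - phi p ^ 2) ^ 2 = 3 * p / (Real.sqrt (1 + p ^ 2)) ^ 5 := by
    rw [h1, phi]
    field_simp
  rw [hA, hB]
  ring
end

section
/- Let ω ∈ L²([0,T]) and let p : [0,s] → ℝ be absolutely continuous with p(0) = 0 and p'(τ) = ω(τ)√(p(τ)²+1) for a.e. τ. Then for every s ∈ [0, min(T, 1/4)] with ∫₀ˢ |ω(τ)|² dτ ≤ (2 ln(3/2))², one has |p(s)| ≤ √s. -/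
open MeasureTheory intervalIntegral

/-- Cauchy–Schwarz for interval integrals, via the discriminant trick. -/
lemma my_interval_cauchy_schwarz {a b : ℝ} (hab : a ≤ b) {f g : ℝ → ℝ}
    (hfg : IntervalIntegrable (fun x => f x * g x) volume a b)
    (hf2 : IntervalIntegrable (fun x => f x ^ 2) volume a b)
    (hg2 : IntervalIntegrable (fun x => g x ^ 2) volume a b) :
    (∫ x in a..b, f x * g x) ^ 2 ≤
      (∫ x in a..b, f x ^ 2) * (∫ x in a..b, g x ^ 2) := by
  have key : ∀ t : ℝ, 0 ≤ (∫ x in a..b, f x ^ 2) * (t * t) +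
      (2 * ∫ x in a..b, f x * g x) * t + (∫ x in a..b, g x ^ 2) := by
    intro t
    have h1 : IntervalIntegrable (fun x => t ^ 2 * f x ^ 2) volume a b := hf2.const_mul _
    have h2 : IntervalIntegrable (fun x => 2 * t * (f x * g x)) volume a b := hfg.const_mul _
    have hsum : IntervalIntegrable
        (fun x => t ^ 2 * f x ^ 2 + 2 * t * (f x * g x)) volume a b := h1.add h2
    have hnonneg : 0 ≤ ∫ x in a..b, (t * f x + g x) ^ 2 :=
      intervalIntegral.integral_nonneg hab (fun x _ => sq_nonneg _)
    have heq : (∫ x in a..b, (t * f x + g x) ^ 2) =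
        t ^ 2 * (∫ x in a..b, f x ^ 2) + 2 * t * (∫ x in a..b, f x * g x) +
          (∫ x in a..b, g x ^ 2) := by
      have : (fun x => (t * f x + g x) ^ 2) =
          fun x => (t ^ 2 * f x ^ 2 + 2 * t * (f x * g x)) + g x ^ 2 := by
        funext x; ring
      rw [this, intervalIntegral.integral_add hsum hg2,
        intervalIntegral.integral_add h1 h2,
        intervalIntegral.integral_const_mul, intervalIntegral.integral_const_mul]
    rw [heq] at hnonneg
    nlinarith [hnonneg]
  have hd := discrim_le_zero key
  rw [discrim] at hd
  nlinarith [hd]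

lemma log_three_halves_le : Real.log (3 / 2) ≤ 0.447 := by
  rw [Real.log_le_iff_le_exp (by norm_num)]
  have h4 : Real.exp (0.447 : ℝ) = Real.exp 0.11175 ^ (4 : ℕ) := by
    rw [← Real.exp_nat_mul]; norm_num
  have hb : (1 + 0.11175 : ℝ) ≤ Real.exp 0.11175 := by
    linarith [Real.add_one_le_exp (0.11175 : ℝ)]
  have hp : ((1 + 0.11175 : ℝ)) ^ (4 : ℕ) ≤ Real.exp 0.11175 ^ (4 : ℕ) :=
    pow_le_pow_left₀ (by norm_num) hb 4
  rw [h4]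
  calc (3 : ℝ) / 2 ≤ (1 + 0.11175 : ℝ) ^ (4 : ℕ) := by norm_num
    _ ≤ _ := hp

theorem momentum_bound (T s : ℝ) (ω p : ℝ → ℝ)
    (hT : 0 < T)
    (hs : s ∈ Set.Icc 0 (min T (1 / 4)))
    (hω2 : IntervalIntegrable (fun τ => (ω τ) ^ 2) volume 0 T)
    (hint : IntervalIntegrable (fun τ => ω τ * Real.sqrt ((p τ) ^ 2 + 1)) volume 0 s)
    (hp0 : p 0 = 0)
    (hpcont : ContinuousOn p (Set.Icc 0 s))
    (hode : ∀ σ ∈ Set.Icc 0 s,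
      p σ = ∫ τ in (0 : ℝ)..σ, ω τ * Real.sqrt ((p τ) ^ 2 + 1))
    (hcost : (∫ τ in (0 : ℝ)..s, (ω τ) ^ 2) ≤ (2 * Real.log (3 / 2)) ^ 2) :
    |p s| ≤ Real.sqrt s := by
  obtain ⟨hs0, hsmin⟩ := hs
  have hsT : s ≤ T := hsmin.trans (min_le_left _ _)
  have hs14 : s ≤ 1 / 4 := hsmin.trans (min_le_right _ _)
  set k : ℝ := 2 * Real.log (3 / 2) with hk
  have hlogpos : 0 ≤ Real.log (3 / 2) := Real.log_nonneg (by norm_num)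
  have hk2 : k ^ 2 ≤ 4 / 5 := by
    have := log_three_halves_le
    nlinarith [hlogpos]
  -- maximum of |p| on [0, s]
  obtain ⟨σ₀, hσ₀mem, hmax⟩ :=
    isCompact_Icc.exists_isMaxOn (s := Set.Icc (0:ℝ) s) ⟨0, Set.left_mem_Icc.2 hs0⟩
      (hpcont.abs)
  set M : ℝ := |p σ₀| with hM
  have hM0 : 0 ≤ M := abs_nonneg _
  have hMb : ∀ σ ∈ Set.Icc (0:ℝ) s, |p σ| ≤ M := fun σ hσ => hmax hσ
  -- key estimate
  have key : ∀ σ ∈ Set.Icc (0:ℝ) s, (p σ) ^ 2 ≤ k ^ 2 * s * (M ^ 2 + 1) := by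
    intro σ hσ
    obtain ⟨hσ0, hσs⟩ := hσ
    have hsub : Set.uIcc (0:ℝ) σ ⊆ Set.uIcc (0:ℝ) s := by
      rw [Set.uIcc_of_le hσ0, Set.uIcc_of_le hs0]
      exact Set.Icc_subset_Icc le_rfl hσs
    have hsubT : Set.uIcc (0:ℝ) σ ⊆ Set.uIcc (0:ℝ) T := by
      rw [Set.uIcc_of_le hσ0, Set.uIcc_of_le (hs0.trans hsT)]
      exact Set.Icc_subset_Icc le_rfl (hσs.trans hsT)
    have hsubT' : Set.uIcc (0:ℝ) s ⊆ Set.uIcc (0:ℝ) T := by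
      rw [Set.uIcc_of_le hs0, Set.uIcc_of_le (hs0.trans hsT)]
      exact Set.Icc_subset_Icc le_rfl hsT
    have hfg : IntervalIntegrable
        (fun τ => ω τ * Real.sqrt ((p τ) ^ 2 + 1)) volume 0 σ := hint.mono_set hsub
    have hf2 : IntervalIntegrable (fun τ => (ω τ) ^ 2) volume 0 σ := hω2.mono_set hsubT
    have hsqeq : (fun τ => (Real.sqrt ((p τ) ^ 2 + 1)) ^ 2) =
        fun τ => (p τ) ^ 2 + 1 := by
      funext τ; exact Real.sq_sqrt (by positivity)
    have hg2' : IntervalIntegrable (fun τ => (p τ) ^ 2 + 1) volume 0 σ := by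
      apply ContinuousOn.intervalIntegrable
      rw [Set.uIcc_of_le hσ0]
      exact ((hpcont.mono (Set.Icc_subset_Icc le_rfl hσs)).pow 2).add continuousOn_const
    have hg2 : IntervalIntegrable
        (fun τ => (Real.sqrt ((p τ) ^ 2 + 1)) ^ 2) volume 0 σ := by
      rw [hsqeq]; exact hg2'
    have hcs := my_interval_cauchy_schwarz hσ0 hfg hf2 hg2
    rw [hsqeq] at hcs
    -- bound the ω² integral
    have hω2s : IntervalIntegrable (fun τ => (ω τ) ^ 2) volume 0 s := hω2.mono_set hsubT'
    have hω2σs : IntervalIntegrable (fun τ => (ω τ) ^ 2) volume σ s := by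
      apply hω2.mono_set
      rw [Set.uIcc_of_le hσs, Set.uIcc_of_le (hs0.trans hsT)]
      exact Set.Icc_subset_Icc hσ0 hsT
    have hsplit : (∫ τ in (0:ℝ)..σ, (ω τ) ^ 2) + (∫ τ in σ..s, (ω τ) ^ 2) =
        ∫ τ in (0:ℝ)..s, (ω τ) ^ 2 :=
      intervalIntegral.integral_add_adjacent_intervals hf2 hω2σs
    have htail : 0 ≤ ∫ τ in σ..s, (ω τ) ^ 2 :=
      intervalIntegral.integral_nonneg hσs (fun x _ => sq_nonneg _)
    have hωbound : (∫ τ in (0:ℝ)..σ, (ω τ) ^ 2) ≤ k ^ 2 := by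
      have : (∫ τ in (0:ℝ)..σ, (ω τ) ^ 2) ≤ ∫ τ in (0:ℝ)..s, (ω τ) ^ 2 := by
        rw [← hsplit]; linarith
      exact this.trans hcost
    have hωnn : 0 ≤ ∫ τ in (0:ℝ)..σ, (ω τ) ^ 2 :=
      intervalIntegral.integral_nonneg hσ0 (fun x _ => sq_nonneg _)
    -- bound the p²+1 integral
    have hpb : (∫ τ in (0:ℝ)..σ, ((p τ) ^ 2 + 1)) ≤ σ * (M ^ 2 + 1) := by
      have hmono : (∫ τ in (0:ℝ)..σ, ((p τ) ^ 2 + 1)) ≤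
          ∫ _ in (0:ℝ)..σ, (M ^ 2 + 1) := by
        apply intervalIntegral.integral_mono_on hσ0 hg2' intervalIntegrable_const
        intro x hx
        have hxmem : x ∈ Set.Icc (0:ℝ) s := ⟨hx.1, hx.2.trans hσs⟩
        have := hMb x hxmem
        nlinarith [abs_nonneg (p x), sq_abs (p x)]
      calc (∫ τ in (0:ℝ)..σ, ((p τ) ^ 2 + 1)) ≤ σ * M ^ 2 + σ := by simpa using hmono
        _ = σ * (M ^ 2 + 1) := by ring
    have hpnn : 0 ≤ ∫ τ in (0:ℝ)..σ, ((p τ) ^ 2 + 1) :=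
      intervalIntegral.integral_nonneg hσ0 (fun x _ => by positivity)
    have hps : σ * (M ^ 2 + 1) ≤ s * (M ^ 2 + 1) := by nlinarith
    have := hode σ ⟨hσ0, hσs⟩
    rw [this]
    calc (∫ τ in (0:ℝ)..σ, ω τ * Real.sqrt ((p τ) ^ 2 + 1)) ^ 2
        ≤ (∫ τ in (0:ℝ)..σ, (ω τ) ^ 2) * (∫ τ in (0:ℝ)..σ, ((p τ) ^ 2 + 1)) := hcs
      _ ≤ k ^ 2 * (s * (M ^ 2 + 1)) := by
          apply mul_le_mul hωbound (hpb.trans hps) hpnn (by positivity)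
      _ = k ^ 2 * s * (M ^ 2 + 1) := by ring
  have hMkey : M ^ 2 ≤ k ^ 2 * s * (M ^ 2 + 1) := by
    have := key σ₀ hσ₀mem
    nlinarith [sq_abs (p σ₀)]
  have hps : (p s) ^ 2 ≤ k ^ 2 * s * (M ^ 2 + 1) := key s ⟨hs0, le_rfl⟩
  have hA : k ^ 2 * s ≤ 1 / 5 := by nlinarith [sq_nonneg k]
  have hM2 : M ^ 2 ≤ 1 / 4 := by
    nlinarith [mul_nonneg (by linarith : (0:ℝ) ≤ 1 / 5 - k ^ 2 * s)
      (by positivity : (0:ℝ) ≤ M ^ 2 + 1)]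
  have hks : 0 ≤ k ^ 2 * s := mul_nonneg (sq_nonneg k) hs0
  have h5 : k ^ 2 * s * (M ^ 2 + 1) ≤ k ^ 2 * s * (5 / 4) := by nlinarith
  have h6 : k ^ 2 * s * (5 / 4) ≤ s := by nlinarith [mul_nonneg (by linarith : (0:ℝ) ≤ 4 / 5 - k ^ 2) hs0]
  have hfinal : (p s) ^ 2 ≤ s := by linarith
  exact Real.abs_le_sqrt hfinal
end
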